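/- If f is measure-expansive, then there exists δ > 0 such that for all x ∈ M, the set Γ_δ(x) is countable (i.e. f is countably-expansive). -/

import Mathlib

open Metric MeasureTheory Set

variable {M : Type*}

/-- The dynamical ball of an iterated homeomorphism. -/
def Gamma [MetricSpace M] (f : M ≃ₜ M) (δ : ℝ) (x : M) : Set M :=
  {y | ∀ n : ℤ, dist ((f.toEquiv ^ n) x) ((f.toEquiv ^ n) y) ≤ δ}

/-!
If no `δ` works, pick for each `n` a point `xₙ` whose dynamical ball of radius `1/(n+1)` is
uncountable, and a non-atomic probability measure `μₙ` concentrated on that closed set. The mixture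
`ν = ∑ 2^{-(n+1)} μₙ` is again non-atomic, so measure-expansivity gives a `δ` with
`ν (Γ_δ(x)) = 0` for all `x`; taking `1/(n+1) < δ`, absolute continuity forces
`μₙ (Γ_{1/(n+1)}(xₙ)) = 0`, contradicting `μₙ (Γ_{1/(n+1)}(xₙ)) = 1`.
-/

open scoped ENNReal unitInterval

theorem Homeomorph.toEquiv_zpow {X : Type*} [TopologicalSpace X] (f : X ≃ₜ X) (n : ℤ) :
    (f ^ n).toEquiv = f.toEquiv ^ n :=
  map_zpow ({ toFun := Homeomorph.toEquiv, map_one' := rfl, map_mul' := fun _ _ => rfl } :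
    (X ≃ₜ X) →* Equiv.Perm X) f n

theorem MeasurableEmbedding.nullSingletonClass_map {α β : Type*} [MeasurableSpace α]
    [MeasurableSpace β] {f : α → β} (hf : MeasurableEmbedding f) (μ : Measure α)
    [NullSingletonClass μ] : NullSingletonClass (μ.map f) :=
  ⟨fun x => by
    rw [hf.map_apply]
    exact Set.Subsingleton.measure_zero (fun _ ha _ hb => hf.injective (ha.trans hb.symm)) μ⟩

namespace MeasureTheory

theorem exists_isProbabilityMeasure_nullSingletonClass {α : Type*} [MeasurableSpace α]
    [StandardBorelSpace α] [Uncountable α] :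
    ∃ μ : Measure α, IsProbabilityMeasure μ ∧ NullSingletonClass μ := by
  have hI : ¬Countable I := fun _ => by simpa using (countable_univ (α := I)).measure_zero volume
  let e : I ≃ᵐ α := PolishSpace.measurableEquivOfNotCountable hI not_countable
  exact ⟨volume.map e, Measure.isProbabilityMeasure_map e.measurable.aemeasurable,
    e.measurableEmbedding.nullSingletonClass_map volume⟩

theorem exists_isProbabilityMeasure_nullSingletonClass_of_not_countable {α : Type*}
    [MeasurableSpace α] [StandardBorelSpace α] {s : Set α} (hs : MeasurableSet s)
    (hs_unc : ¬s.Countable) :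
    ∃ μ : Measure α, IsProbabilityMeasure μ ∧ NullSingletonClass μ ∧ μ s = 1 := by
  have := hs.standardBorel
  have : Uncountable s := by rwa [← not_countable_iff, countable_coe_iff]
  obtain ⟨μ, _, _⟩ := exists_isProbabilityMeasure_nullSingletonClass (α := s)
  have hval := MeasurableEmbedding.subtype_coe hs
  refine ⟨μ.map (↑), Measure.isProbabilityMeasure_map hval.measurable.aemeasurable,
    hval.nullSingletonClass_map μ, ?_⟩
  rw [hval.map_apply, Subtype.coe_preimage_self, measure_univ]

theorem exists_isProbabilityMeasure_nullSingletonClass_absolutelyContinuous {α : Type*}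
    [MeasurableSpace α] (μ : ℕ → Measure α) [∀ n, IsProbabilityMeasure (μ n)]
    [∀ n, NullSingletonClass (μ n)] :
    ∃ ν : Measure α, IsProbabilityMeasure ν ∧ NullSingletonClass ν ∧ ∀ n, μ n ≪ ν := by
  refine ⟨Measure.sum fun n => (2⁻¹ : ℝ≥0∞) ^ (n + 1) • μ n, ⟨?_⟩, ⟨fun x => ?_⟩, fun n => ?_⟩
  · simp [ENNReal.tsum_geometric_add_one, ENNReal.one_sub_inv_two, ENNReal.inv_mul_cancel]
  · simp
  · exact Measure.absolutelyContinuous_sum_right n (Measure.absolutelyContinuous_smul (by simp))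

end MeasureTheory

section Gamma

variable [MetricSpace M] (f : M ≃ₜ M)

theorem Gamma_eq_iInter_preimage_closedBall (δ : ℝ) (x : M) :
    Gamma f δ x = ⋂ n : ℤ, ⇑(f ^ n) ⁻¹' closedBall ((f ^ n) x) δ := by
  ext y
  simp [Gamma, dist_comm, ← Homeomorph.toEquiv_zpow]

theorem isClosed_Gamma (δ : ℝ) (x : M) : IsClosed (Gamma f δ x) := by
  rw [Gamma_eq_iInter_preimage_closedBall]
  exact isClosed_iInter fun n => isClosed_closedBall.preimage (f ^ n).continuous

theorem Gamma_mono {δ δ' : ℝ} (h : δ ≤ δ') (x : M) : Gamma f δ x ⊆ Gamma f δ' x :=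
  fun _ hy n => (hy n).trans h

end Gamma

theorem stmt2 [MetricSpace M] [CompactSpace M] [MeasurableSpace M] [BorelSpace M]
    (f : M ≃ₜ M)
    (h : ∀ μ : Measure M, IsProbabilityMeasure μ → (∀ x : M, μ {x} = 0) →
      ∃ δ > (0:ℝ), ∀ x : M, μ (Gamma f δ x) = 0) :
    ∃ δ > (0:ℝ), ∀ x : M, (Gamma f δ x).Countable := by
  by_contra! hunc
  choose x hx using fun n : ℕ => hunc (1 / ((n : ℝ) + 1)) (by positivity)
  choose μ _ _ hμ using fun n => exists_isProbabilityMeasure_nullSingletonClass_of_not_countable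
    (isClosed_Gamma f _ (x n)).measurableSet (hx n)
  obtain ⟨ν, hν, _, hμν⟩ := exists_isProbabilityMeasure_nullSingletonClass_absolutelyContinuous μ
  obtain ⟨δ, hδ, hνΓ⟩ := h ν hν measure_singleton
  obtain ⟨n, hn⟩ := exists_nat_one_div_lt hδ
  have hμΓ : μ n (Gamma f δ (x n)) = 0 := hμν n (hνΓ (x n))
  exact one_ne_zero ((hμ n).symm.trans (measure_mono_null (Gamma_mono f hn.le (x n)) hμΓ))
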